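/- Let G be a finite simple connected graph with modularity matrix M and adjacency matrix A, and let u be an eigenvector of M associated to the algebraic modularity m(G), oriented so that d^T u ≥ 0. If m(G) is a simple eigenvalue of M and is not an eigenvalue of A, then u induces exactly one positive strong nodal domain on G. -/

import Mathlib

open Matrix Finset

variable {n : ℕ}

/-- The real-valued degree of a vertex. -/
noncomputable def degR (G : SimpleGraph (Fin n)) [DecidableRel G.Adj] (i : Fin n) : ℝ :=
  (G.degree i : ℝ)

/-- The volume of the graph: the sum of all degrees. -/
noncomputable def volG (G : SimpleGraph (Fin n)) [DecidableRel G.Adj] : ℝ :=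
  ∑ i, degR G i

/-- The modularity matrix `M = A - d dᵀ / vol G`. -/
noncomputable def modM (G : SimpleGraph (Fin n)) [DecidableRel G.Adj] :
    Matrix (Fin n) (Fin n) ℝ :=
  G.adjMatrix ℝ - (volG G)⁻¹ • Matrix.vecMulVec (degR G) (degR G)

/-- The algebraic modularity `m(G) = max { xᵀMx / xᵀx : x ≠ 0, xᵀ𝟙 = 0 }`. -/
noncomputable def algMod (G : SimpleGraph (Fin n)) [DecidableRel G.Adj] : ℝ :=
  sSup {r : ℝ | ∃ x : Fin n → ℝ, x ≠ 0 ∧ (∑ i, x i) = 0 ∧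
    r = (x ⬝ᵥ (modM G *ᵥ x)) / (x ⬝ᵥ x)}

/-- `S` is a positive strong nodal domain of `G` induced by `u`: a maximal
connected subset of `{i : u i > 0}`. -/
def IsPosStrongNodalDomain (G : SimpleGraph (Fin n)) (u : Fin n → ℝ)
    (S : Set (Fin n)) : Prop :=
  S ⊆ {i | 0 < u i} ∧ (G.induce S).Connected ∧
    ∀ T : Set (Fin n), S ⊆ T → T ⊆ {i | 0 < u i} → (G.induce T).Connected → T = S

/-!
Since `M 𝟙 = 0` and `M` is symmetric, `m(G)` bounds the Rayleigh quotient of `M` on all of `ℝⁿ`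
once `m(G) ≥ 0`; and `m(G) ≥ 0` unless `G` is complete, where `∑ u = 0` forces `dᵀu = 0`, making
`u` an eigenvector of `A`. Let `v` be the restriction of `u` to a union `S` of positive nodal
domains. Edges leaving `S` end where `u ≤ 0`, and `dᵀu ≥ 0`, so
`m(G) ‖v‖² = vᵀ M u ≤ vᵀ A u ≤ vᵀ A v`. Given two disjoint such sets with restrictions `v, w`,
the vector `y = (dᵀw) v - (dᵀv) w` is orthogonal to `d`, hence `yᵀ M y = yᵀ A y ≥ m(G) ‖y‖²`:
`y` maximises the Rayleigh quotient, so it is an eigenvector for `m(G)`, hence a multiple of `u`.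
This is impossible, since `y` takes both signs on vertices where `u > 0`.
-/

namespace Matrix

variable {ι : Type*} [Fintype ι]

theorem IsSymm.mulVec_eq_smul_of_le_dotProduct_mulVec {N : Matrix ι ι ℝ}
    (hN : N.IsSymm) {μ : ℝ} (hmax : ∀ x, x ⬝ᵥ (N *ᵥ x) ≤ μ * (x ⬝ᵥ x)) {y : ι → ℝ}
    (hy : μ * (y ⬝ᵥ y) ≤ y ⬝ᵥ (N *ᵥ y)) : N *ᵥ y = μ • y := by
  classical
  have hquad : ∀ x, x ⬝ᵥ ((μ • 1 - N) *ᵥ x) = μ * (x ⬝ᵥ x) - x ⬝ᵥ (N *ᵥ x) := fun x => by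
    rw [sub_mulVec, smul_mulVec, one_mulVec, dotProduct_sub, dotProduct_smul, smul_eq_mul]
  have hpsd : (μ • 1 - N).PosSemidef := by
    refine posSemidef_iff_dotProduct_mulVec.mpr
      ⟨(isHermitian_one.smul (IsSelfAdjoint.all μ)).sub (isHermitian_iff_isSymm.mpr hN), fun x => ?_⟩
    rw [star_trivial, hquad]
    linarith [hmax x]
  have hker := (hpsd.dotProduct_mulVec_zero_iff y).mp (by
    rw [star_trivial, hquad]; linarith [hmax y])
  rw [sub_mulVec, smul_mulVec, one_mulVec, sub_eq_zero] at hker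
  exact hker.symm

theorem IsSymm.one_dotProduct_mulVec_eq_zero {N : Matrix ι ι ℝ} (hN : N.IsSymm)
    (h1 : N *ᵥ 1 = 0) (x : ι → ℝ) : 1 ⬝ᵥ (N *ᵥ x) = 0 := by
  rw [dotProduct_mulVec, ← mulVec_transpose, hN.eq, h1, zero_dotProduct]

theorem dotProduct_mulVec_le_sum_abs_mul (N : Matrix ι ι ℝ) (x : ι → ℝ) :
    x ⬝ᵥ (N *ᵥ x) ≤ (∑ a, ∑ b, |N a b|) * (x ⬝ᵥ x) := by
  have hsq : ∀ a, x a * x a ≤ x ⬝ᵥ x := fun a =>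
    single_le_sum (f := fun k => x k * x k) (fun k _ => mul_self_nonneg _) (mem_univ a)
  have hab : ∀ a b, |x a * x b| ≤ x ⬝ᵥ x := fun a b => by
    rw [abs_mul]
    nlinarith [hsq a, hsq b, sq_abs (x a), sq_abs (x b), sq_nonneg (|x a| - |x b|)]
  calc x ⬝ᵥ (N *ᵥ x) = ∑ a, ∑ b, N a b * (x a * x b) := by
        simp only [dotProduct, mulVec, mul_sum]
        exact sum_congr rfl fun a _ => sum_congr rfl fun b _ => by ring
    _ ≤ ∑ a, ∑ b, |N a b| * (x ⬝ᵥ x) := by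
        refine sum_le_sum fun a _ => sum_le_sum fun b _ => ?_
        calc N a b * (x a * x b) ≤ |N a b * (x a * x b)| := le_abs_self _
          _ = |N a b| * |x a * x b| := abs_mul _ _
          _ ≤ |N a b| * (x ⬝ᵥ x) := mul_le_mul_of_nonneg_left (hab a b) (abs_nonneg _)
    _ = (∑ a, ∑ b, |N a b|) * (x ⬝ᵥ x) := by simp only [sum_mul]

end Matrix

section DotProduct

variable {ι : Type*} [Fintype ι]

theorem dotProduct_self_pos {x : ι → ℝ} (hx : x ≠ 0) : 0 < x ⬝ᵥ x :=
  (sum_nonneg fun i _ => mul_self_nonneg (x i)).lt_of_ne' (dotProduct_self_eq_zero.not.mpr hx)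

theorem exists_pos_of_dotProduct_nonneg {d x : ι → ℝ} (hd : ∀ i, 0 < d i) (hx : x ≠ 0)
    (h : 0 ≤ d ⬝ᵥ x) : ∃ i, 0 < x i := by
  by_contra! hneg
  have hterm : ∀ i ∈ univ, d i * x i ≤ 0 := fun i _ =>
    mul_nonpos_of_nonneg_of_nonpos (hd i).le (hneg i)
  have hzero := (sum_eq_zero_iff_of_nonpos hterm).mp (le_antisymm (sum_nonpos hterm) h)
  exact hx (funext fun i => (mul_eq_zero.mp (hzero i (mem_univ i))).resolve_left (hd i).ne')

end DotProduct

section Centering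

variable {ι : Type*} [Fintype ι]

noncomputable def centered (y : ι → ℝ) : ι → ℝ :=
  y - ((∑ i, y i) / Fintype.card ι) • 1

theorem sum_centered (y : ι → ℝ) : ∑ i, centered y i = 0 := by
  rcases isEmpty_or_nonempty ι with _ | _
  · simp
  simp only [centered, Pi.sub_apply, Pi.smul_apply, Pi.one_apply, smul_eq_mul, mul_one,
    sum_sub_distrib, sum_const, card_univ, nsmul_eq_mul]
  field_simp
  ring

theorem centered_dotProduct_self_le (y : ι → ℝ) : centered y ⬝ᵥ centered y ≤ y ⬝ᵥ y := by
  set c : ι → ℝ := ((∑ i, y i) / Fintype.card ι) • 1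
  have hy : y = centered y + c := (sub_add_cancel y c).symm
  have hcz : c ⬝ᵥ centered y = 0 := by
    simp [c, dotProduct, ← mul_sum, sum_centered]
  have hzc : centered y ⬝ᵥ c = 0 := by rw [dotProduct_comm, hcz]
  calc centered y ⬝ᵥ centered y ≤ centered y ⬝ᵥ centered y + c ⬝ᵥ c :=
        le_add_of_nonneg_right (sum_nonneg fun i _ => mul_self_nonneg _)
    _ = y ⬝ᵥ y := by
        conv_rhs => rw [hy]
        simp only [add_dotProduct, dotProduct_add, hcz, hzc]
        ring

theorem eq_of_centered_eq_zero {y : ι → ℝ} (hy : centered y = 0) (i j : ι) : y i = y j := by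
  have hi := congrFun hy i
  have hj := congrFun hy j
  simp only [centered, Pi.sub_apply, Pi.smul_apply, Pi.one_apply, smul_eq_mul, mul_one,
    Pi.zero_apply] at hi hj
  linarith

theorem mulVec_centered {N : Matrix ι ι ℝ} (hN : N *ᵥ 1 = 0) (y : ι → ℝ) :
    N *ᵥ centered y = N *ᵥ y := by
  rw [centered, mulVec_sub, mulVec_smul, hN, smul_zero, sub_zero]

theorem centered_dotProduct_mulVec_centered {N : Matrix ι ι ℝ} (hN : N.IsSymm)
    (h1 : N *ᵥ 1 = 0) (y : ι → ℝ) :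
    centered y ⬝ᵥ (N *ᵥ centered y) = y ⬝ᵥ (N *ᵥ y) := by
  rw [mulVec_centered h1, centered, sub_dotProduct, smul_dotProduct,
    hN.one_dotProduct_mulVec_eq_zero h1, smul_zero, sub_zero]

end Centering

section PosClosed

variable {V : Type*}

/-- `S` is a union of positive strong nodal domains of `u`. -/
def IsPosClosed (G : SimpleGraph V) (u : V → ℝ) (S : Set V) : Prop :=
  (∀ i ∈ S, 0 < u i) ∧ ∀ i ∈ S, ∀ j, G.Adj i j → 0 < u j → j ∈ S

variable {G : SimpleGraph V} {u : V → ℝ}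

theorem isPosClosed_image_supp (C : (G.induce {i | 0 < u i}).ConnectedComponent) :
    IsPosClosed G u (Subtype.val '' C.supp) := by
  refine ⟨fun i ⟨k, _, hk⟩ => hk ▸ k.2, ?_⟩
  rintro _ ⟨i, hi, rfl⟩ j hij hj
  exact ⟨⟨j, hj⟩, (C.mem_supp_congr_adj (SimpleGraph.induce_adj.mpr hij)).mp hi, rfl⟩

variable [Fintype V]

theorem indicator_dotProduct_self_eq (S : Set V) (u : V → ℝ) :
    S.indicator u ⬝ᵥ u = S.indicator u ⬝ᵥ S.indicator u := by
  refine sum_congr rfl fun i _ => ?_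
  by_cases hi : i ∈ S <;> simp [hi]

theorem indicator_dotProduct_indicator_eq_zero {S T : Set V} (hST : Disjoint S T)
    (u w : V → ℝ) : S.indicator u ⬝ᵥ T.indicator w = 0 := by
  refine sum_eq_zero fun i _ => ?_
  by_cases hi : i ∈ S
  · simp [Set.indicator_of_notMem (hST.notMem_of_mem_left hi)]
  · simp [hi]

variable [DecidableRel G.Adj] {S : Set V}

theorem IsPosClosed.indicator_dotProduct_adjMatrix_mulVec_le (hS : IsPosClosed G u S) :
    S.indicator u ⬝ᵥ (G.adjMatrix ℝ *ᵥ u) ≤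
      S.indicator u ⬝ᵥ (G.adjMatrix ℝ *ᵥ S.indicator u) := by
  simp only [dotProduct, mulVec, mul_sum]
  refine sum_le_sum fun i _ => sum_le_sum fun j _ => ?_
  by_cases hi : i ∈ S
  swap
  · simp [hi]
  by_cases hj : j ∈ S
  · simp [hj]
  by_cases hij : G.Adj i j
  · have huj : u j ≤ 0 := not_lt.mp fun h => hj (hS.2 i hi j hij h)
    simp only [Set.indicator_of_mem hi, Set.indicator_of_notMem hj,
      SimpleGraph.adjMatrix_apply, if_pos hij]
    nlinarith [hS.1 i hi]
  · simp [hij]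

theorem IsPosClosed.indicator_dotProduct_adjMatrix_mulVec_indicator_eq_zero
    (hS : IsPosClosed G u S) {T : Set V} (hT : ∀ j ∈ T, 0 < u j) (hST : Disjoint S T) :
    S.indicator u ⬝ᵥ (G.adjMatrix ℝ *ᵥ T.indicator u) = 0 := by
  simp only [dotProduct, mulVec, mul_sum]
  refine sum_eq_zero fun i _ => sum_eq_zero fun j _ => ?_
  by_cases hi : i ∈ S
  swap
  · simp [hi]
  by_cases hj : j ∈ T
  swap
  · simp [hj]
  have hij : ¬ G.Adj i j := fun hij =>
    hST.notMem_of_mem_right hj (hS.2 i hi j hij (hT j hj))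
  simp [hij]

end PosClosed

section Modularity

variable (G : SimpleGraph (Fin n)) [DecidableRel G.Adj]

theorem modM_isSymm : (modM G).IsSymm :=
  IsSymm.ext fun i j => by simp [modM, G.adj_comm, vecMulVec_apply, mul_comm]

theorem modM_mulVec (x : Fin n → ℝ) :
    modM G *ᵥ x = G.adjMatrix ℝ *ᵥ x - ((volG G)⁻¹ * (degR G ⬝ᵥ x)) • degR G := by
  rw [modM, sub_mulVec, smul_mulVec, vecMulVec_mulVec, op_smul_eq_smul, smul_smul]

theorem dotProduct_modM_mulVec (x y : Fin n → ℝ) :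
    x ⬝ᵥ (modM G *ᵥ y) =
      x ⬝ᵥ (G.adjMatrix ℝ *ᵥ y) - (volG G)⁻¹ * ((degR G ⬝ᵥ x) * (degR G ⬝ᵥ y)) := by
  rw [modM_mulVec, dotProduct_sub, dotProduct_smul, smul_eq_mul, dotProduct_comm x (degR G)]
  ring

theorem modM_mulVec_of_degR_dotProduct_eq_zero {x : Fin n → ℝ} (hx : degR G ⬝ᵥ x = 0) :
    modM G *ᵥ x = G.adjMatrix ℝ *ᵥ x := by
  simp [modM_mulVec, hx]

theorem modM_mulVec_one (hvol : volG G ≠ 0) : modM G *ᵥ 1 = 0 := by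
  have hA : G.adjMatrix ℝ *ᵥ 1 = degR G := by ext i; simp [degR]
  have hd : degR G ⬝ᵥ 1 = volG G := by simp [dotProduct, volG]
  rw [modM_mulVec, hA, hd, inv_mul_cancel₀ hvol, one_smul, sub_self]

theorem sum_eq_zero_of_modM_mulVec_eq_smul (hvol : volG G ≠ 0) {μ : ℝ} (hμ : μ ≠ 0)
    {x : Fin n → ℝ} (hx : modM G *ᵥ x = μ • x) : ∑ i, x i = 0 := by
  have h := (modM_isSymm G).one_dotProduct_mulVec_eq_zero (modM_mulVec_one G hvol) x
  rw [hx, dotProduct_smul, smul_eq_mul, one_dotProduct] at h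
  exact (mul_eq_zero.mp h).resolve_left hμ

theorem modM_eq_adjMatrix_of_subsingleton [Subsingleton (Fin n)] : modM G = G.adjMatrix ℝ := by
  have hdeg : degR G = 0 := funext fun i => by simp [degR]
  simp [modM, hdeg]

end Modularity

section AlgebraicModularity

variable {G : SimpleGraph (Fin n)} [DecidableRel G.Adj]

theorem dotProduct_modM_mulVec_le_of_sum_eq_zero {x : Fin n → ℝ} (hx : ∑ i, x i = 0) :
    x ⬝ᵥ (modM G *ᵥ x) ≤ algMod G * (x ⬝ᵥ x) := by
  rcases eq_or_ne x 0 with rfl | hx0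
  · simp
  -- without this bound `sSup` would be the junk value `0`
  have hbdd : BddAbove {r : ℝ | ∃ x : Fin n → ℝ, x ≠ 0 ∧ (∑ i, x i) = 0 ∧
      r = (x ⬝ᵥ (modM G *ᵥ x)) / (x ⬝ᵥ x)} := by
    refine ⟨∑ a, ∑ b, |modM G a b|, ?_⟩
    rintro _ ⟨y, hy, -, rfl⟩
    exact (div_le_iff₀ (dotProduct_self_pos hy)).mpr (dotProduct_mulVec_le_sum_abs_mul _ y)
  have hle := le_csSup hbdd ⟨x, hx0, hx, rfl⟩
  rwa [div_le_iff₀ (dotProduct_self_pos hx0)] at hle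

theorem dotProduct_modM_mulVec_le_centered (hvol : volG G ≠ 0) (y : Fin n → ℝ) :
    y ⬝ᵥ (modM G *ᵥ y) ≤ algMod G * (centered y ⬝ᵥ centered y) := by
  rw [← centered_dotProduct_mulVec_centered (modM_isSymm G) (modM_mulVec_one G hvol)]
  exact dotProduct_modM_mulVec_le_of_sum_eq_zero (sum_centered y)

theorem dotProduct_modM_mulVec_le (hvol : volG G ≠ 0) (h0 : 0 ≤ algMod G) (y : Fin n → ℝ) :
    y ⬝ᵥ (modM G *ᵥ y) ≤ algMod G * (y ⬝ᵥ y) :=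
  (dotProduct_modM_mulVec_le_centered hvol y).trans
    (mul_le_mul_of_nonneg_left (centered_dotProduct_self_le y) h0)

theorem algMod_nonneg_of_not_adj (hvol : volG G ≠ 0) {i j : Fin n} (hij : i ≠ j)
    (hadj : ¬ G.Adj i j) (hi : 0 < degR G i) : 0 ≤ algMod G := by
  set y : Fin n → ℝ := Pi.single i (degR G j) - Pi.single j (degR G i)
  have hA : y ⬝ᵥ (G.adjMatrix ℝ *ᵥ y) = 0 := by
    simp [y, mulVec_sub, mulVec_single, dotProduct_sub, sub_dotProduct, hadj, G.adj_comm j i]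
  have hd : degR G ⬝ᵥ y = 0 := by
    simp [y, dotProduct_sub, dotProduct_single, mul_comm]
  have hM : y ⬝ᵥ (modM G *ᵥ y) = 0 := by
    rw [dotProduct_modM_mulVec, hA, hd]; ring
  have hc : centered y ≠ 0 := fun hc => by
    have := eq_of_centered_eq_zero hc i j
    simp only [y, Pi.sub_apply, Pi.single_eq_same, Pi.single_eq_of_ne hij,
      Pi.single_eq_of_ne (Ne.symm hij), sub_zero, zero_sub] at this
    linarith [show 0 ≤ degR G j from Nat.cast_nonneg _]
  have := dotProduct_modM_mulVec_le_centered hvol y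
  exact nonneg_of_mul_nonneg_left (hM ▸ this) (dotProduct_self_pos hc)

end AlgebraicModularity

section NodalDomains

variable {G : SimpleGraph (Fin n)} [DecidableRel G.Adj]

theorem algMod_nonneg (hvol : volG G ≠ 0) (hdeg : ∀ i, 0 < degR G i) {u : Fin n → ℝ}
    (hu : u ≠ 0) (heig : modM G *ᵥ u = algMod G • u)
    (hnotA : ¬ ∃ v : Fin n → ℝ, v ≠ 0 ∧ G.adjMatrix ℝ *ᵥ v = algMod G • v) :
    0 ≤ algMod G := by
  by_cases hcomplete : ∀ i j, i ≠ j → G.Adj i j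
  · by_contra hneg
    have hsum := sum_eq_zero_of_modM_mulVec_eq_smul G hvol (not_le.mp hneg).ne heig
    have hdeg_eq : ∀ i, degR G i = (n - 1 : ℕ) := fun i => by
      have : G.neighborFinset i = univ.erase i := by
        ext j
        simpa [ne_comm] using ⟨G.ne_of_adj, hcomplete i j⟩
      simp [degR, ← G.card_neighborFinset_eq_degree, this]
    have hd : degR G ⬝ᵥ u = 0 := by
      simp [dotProduct, hdeg_eq, ← mul_sum, hsum]
    exact hnotA ⟨u, hu, modM_mulVec_of_degR_dotProduct_eq_zero G hd ▸ heig⟩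
  · obtain ⟨i, j, hij, hadj⟩ : ∃ i j, i ≠ j ∧ ¬ G.Adj i j := by simpa using hcomplete
    exact algMod_nonneg_of_not_adj hvol hij hadj (hdeg i)

variable {u : Fin n → ℝ} {S T : Set (Fin n)}

theorem IsPosClosed.algMod_mul_le (hvol : 0 < volG G) (heig : modM G *ᵥ u = algMod G • u)
    (hor : 0 ≤ degR G ⬝ᵥ u) (hS : IsPosClosed G u S) :
    algMod G * (S.indicator u ⬝ᵥ S.indicator u) ≤
      S.indicator u ⬝ᵥ (G.adjMatrix ℝ *ᵥ S.indicator u) := by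
  have hdS : 0 ≤ degR G ⬝ᵥ S.indicator u :=
    sum_nonneg fun i _ => mul_nonneg (Nat.cast_nonneg _)
      (Set.indicator_nonneg (fun i hi => (hS.1 i hi).le) i)
  have hcorr := mul_nonneg (inv_nonneg.mpr hvol.le) (mul_nonneg hdS hor)
  calc algMod G * (S.indicator u ⬝ᵥ S.indicator u) = S.indicator u ⬝ᵥ (modM G *ᵥ u) := by
        rw [heig, dotProduct_smul, smul_eq_mul, indicator_dotProduct_self_eq]
    _ ≤ S.indicator u ⬝ᵥ (G.adjMatrix ℝ *ᵥ u) := by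
        rw [dotProduct_modM_mulVec]; linarith
    _ ≤ S.indicator u ⬝ᵥ (G.adjMatrix ℝ *ᵥ S.indicator u) :=
        hS.indicator_dotProduct_adjMatrix_mulVec_le

theorem IsPosClosed.degR_dotProduct_indicator_pos (hS : IsPosClosed G u S)
    (hdeg : ∀ i, 0 < degR G i) {a : Fin n} (ha : a ∈ S) : 0 < degR G ⬝ᵥ S.indicator u :=
  sum_pos' (fun i _ => mul_nonneg (hdeg i).le
      (Set.indicator_nonneg (fun i hi => (hS.1 i hi).le) i))
    ⟨a, mem_univ a, by rw [Set.indicator_of_mem ha]; exact mul_pos (hdeg a) (hS.1 a ha)⟩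

theorem IsPosClosed.not_disjoint (hvol : 0 < volG G) (hdeg : ∀ i, 0 < degR G i)
    (h0 : 0 ≤ algMod G) (heig : modM G *ᵥ u = algMod G • u) (hor : 0 ≤ degR G ⬝ᵥ u)
    (hsimple : ∀ v : Fin n → ℝ, modM G *ᵥ v = algMod G • v → ∃ c : ℝ, v = c • u)
    (hS : IsPosClosed G u S) (hT : IsPosClosed G u T) {a b : Fin n} (ha : a ∈ S) (hb : b ∈ T) :
    ¬ Disjoint S T := by
  intro hST
  set v := S.indicator u
  set w := T.indicator u
  set p := degR G ⬝ᵥ v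
  set q := degR G ⬝ᵥ w
  have hp : 0 < p := hS.degR_dotProduct_indicator_pos hdeg ha
  have hq : 0 < q := hT.degR_dotProduct_indicator_pos hdeg hb
  set y := q • v - p • w
  have hdy : degR G ⬝ᵥ y = 0 := by
    simp only [y, dotProduct_sub, dotProduct_smul, smul_eq_mul]; ring
  have hvw : v ⬝ᵥ w = 0 := indicator_dotProduct_indicator_eq_zero hST u u
  have hwv : w ⬝ᵥ v = 0 := indicator_dotProduct_indicator_eq_zero hST.symm u u
  have hAvw : v ⬝ᵥ (G.adjMatrix ℝ *ᵥ w) = 0 :=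
    hS.indicator_dotProduct_adjMatrix_mulVec_indicator_eq_zero hT.1 hST
  have hAwv : w ⬝ᵥ (G.adjMatrix ℝ *ᵥ v) = 0 :=
    hT.indicator_dotProduct_adjMatrix_mulVec_indicator_eq_zero hS.1 hST.symm
  have hy : algMod G * (y ⬝ᵥ y) ≤ y ⬝ᵥ (modM G *ᵥ y) := by
    rw [dotProduct_modM_mulVec, hdy]
    simp only [y, mulVec_sub, mulVec_smul, sub_dotProduct, dotProduct_sub, smul_dotProduct,
      dotProduct_smul, smul_eq_mul, hvw, hwv, hAvw, hAwv]
    nlinarith [mul_le_mul_of_nonneg_left (hS.algMod_mul_le hvol heig hor) (sq_nonneg q),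
      mul_le_mul_of_nonneg_left (hT.algMod_mul_le hvol heig hor) (sq_nonneg p)]
  obtain ⟨c, hc⟩ := hsimple y ((modM_isSymm G).mulVec_eq_smul_of_le_dotProduct_mulVec
    (dotProduct_modM_mulVec_le hvol.ne' h0) hy)
  have hca : q * u a = c * u a := by
    simpa [y, v, w, ha, hST.notMem_of_mem_left ha] using congrFun hc a
  have hcb : -p * u b = c * u b := by
    simpa [y, v, w, hb, hST.notMem_of_mem_right hb] using congrFun hc b
  linarith [mul_right_cancel₀ (hS.1 a ha).ne' hca, mul_right_cancel₀ (hT.1 b hb).ne' hcb]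

theorem preconnected_induce_pos (hvol : 0 < volG G) (hdeg : ∀ i, 0 < degR G i)
    (h0 : 0 ≤ algMod G) (heig : modM G *ᵥ u = algMod G • u) (hor : 0 ≤ degR G ⬝ᵥ u)
    (hsimple : ∀ v : Fin n → ℝ, modM G *ᵥ v = algMod G • v → ∃ c : ℝ, v = c • u) :
    (G.induce {i | 0 < u i}).Preconnected := by
  intro a b
  by_contra hab
  have hCD : (G.induce _).connectedComponentMk a ≠ (G.induce _).connectedComponentMk b :=
    fun h => hab (SimpleGraph.ConnectedComponent.exact h)
  refine (isPosClosed_image_supp _).not_disjoint hvol hdeg h0 heig hor hsimple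
    (isPosClosed_image_supp _) ⟨a, rfl, rfl⟩ ⟨b, rfl, rfl⟩ ?_
  exact (Set.disjoint_image_iff Subtype.val_injective).mpr
    (SimpleGraph.pairwise_disjoint_supp_connectedComponent _ hCD)

omit [DecidableRel G.Adj] in
theorem ncard_setOf_isPosStrongNodalDomain_eq_one (h : (G.induce {i | 0 < u i}).Connected) :
    {S : Set (Fin n) | IsPosStrongNodalDomain G u S}.ncard = 1 := by
  refine Set.ncard_eq_one.mpr ⟨{i | 0 < u i}, Set.eq_singleton_iff_unique_mem.mpr ⟨?_, ?_⟩⟩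
  · exact ⟨subset_rfl, h, fun T hST hT _ => hT.antisymm hST⟩
  · exact fun S ⟨hS, _, hmax⟩ => (hmax _ hS subset_rfl h).symm

end NodalDomains

/-- If `u` is an eigenvector associated to the algebraic modularity `m(G)`,
oriented so that `dᵀu ≥ 0`, and `m(G)` is a simple eigenvalue of `M` that is not an
eigenvalue of the adjacency matrix `A`, then `u` induces exactly one positive
strong nodal domain. -/
theorem one_positive_nodal_domain (G : SimpleGraph (Fin n))
    [DecidableRel G.Adj] (hG : G.Connected)
    (u : Fin n → ℝ) (hu : u ≠ 0)
    (heig : modM G *ᵥ u = algMod G • u)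
    (hor : 0 ≤ degR G ⬝ᵥ u)
    (hsimple : ∀ v : Fin n → ℝ, modM G *ᵥ v = algMod G • v → ∃ c : ℝ, v = c • u)
    (hnotA : ¬ ∃ v : Fin n → ℝ, v ≠ 0 ∧ G.adjMatrix ℝ *ᵥ v = algMod G • v) :
    {S : Set (Fin n) | IsPosStrongNodalDomain G u S}.ncard = 1 := by
  rcases subsingleton_or_nontrivial (Fin n) with _ | _
  · exact absurd ⟨u, hu, modM_eq_adjMatrix_of_subsingleton G ▸ heig⟩ hnotA
  have hdeg : ∀ i, 0 < degR G i := fun i =>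
    Nat.cast_pos.mpr (hG.preconnected.degree_pos_of_nontrivial i)
  have hvol : 0 < volG G := sum_pos (fun i _ => hdeg i) univ_nonempty
  have h0 := algMod_nonneg hvol.ne' hdeg hu heig hnotA
  obtain ⟨a, ha⟩ := exists_pos_of_dotProduct_nonneg hdeg hu hor
  have : Nonempty {i | 0 < u i} := ⟨⟨a, ha⟩⟩
  exact ncard_setOf_isPosStrongNodalDomain_eq_one
    ⟨preconnected_induce_pos hvol hdeg h0 heig hor hsimple⟩
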